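/- The Jerison–Lee bubble U(z,t) = (t² + (1+|z|²)²)^{−1/2} is a positive solution of the CR Yamabe equation on the Heisenberg group: for every (z,t) ∈ ℂ×ℝ, X(X U)(z,t) + Y(Y U)(z,t) = −4·U(z,t)³, i.e. −Δ_H U = 4U³ where Δ_H = X² + Y² is the (unnormalized) sublaplacian of H¹. -/

import Mathlib

/-!
Write `w = 1 + |z|²` and `D = t² + w²`, so that `U = D^(-1/2)`. The fields `X`, `Y` are
derivations with `X D = 4A`, `Y D = 4B`, `X A = Y B = 3w - 2` and `A² + B² = (w - 1) D`, which
gives `Δ_H (D^c) = 4c (6w - 4 + 4(c - 1)(w - 1)) D^(c-1)` for every real `c`. The exponent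
`c = -1/2` is the one for which the bracket does not depend on `w`: it equals `2`, so
`Δ_H U = -4 D^(-3/2) = -4 U³`.
-/

open MeasureTheory Real

/-- The left-invariant Heisenberg vector field `X f = ∂f/∂x + 2y ∂f/∂t`
acting on functions on `ℂ × ℝ` (coordinates `z = x + iy`, `t`). -/
noncomputable def heisX (f : ℂ × ℝ → ℝ) (p : ℂ × ℝ) : ℝ :=
  fderiv ℝ f p ((1 : ℂ), (0 : ℝ)) + 2 * p.1.im * fderiv ℝ f p ((0 : ℂ), (1 : ℝ))

/-- The left-invariant Heisenberg vector field `Y f = ∂f/∂y − 2x ∂f/∂t`. -/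
noncomputable def heisY (f : ℂ × ℝ → ℝ) (p : ℂ × ℝ) : ℝ :=
  fderiv ℝ f p (Complex.I, (0 : ℝ)) - 2 * p.1.re * fderiv ℝ f p ((0 : ℂ), (1 : ℝ))

/-- The Jerison–Lee bubble `U(z,t) = (t² + (1+|z|²)²)^{-1/2}` on `H¹ = ℂ × ℝ`. -/
noncomputable def jerisonLeeBubble (p : ℂ × ℝ) : ℝ :=
  (p.2 ^ 2 + (1 + ‖p.1‖ ^ 2) ^ 2) ^ (-(1 / 2 : ℝ))

section DerivAlong

variable {E : Type*} [NormedAddCommGroup E] [NormedSpace ℝ E] (V : E → E) {f g : E → ℝ} {p : E}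

noncomputable def derivAlong (f : E → ℝ) (p : E) : ℝ := fderiv ℝ f p (V p)

lemma derivAlong_mul (hf : DifferentiableAt ℝ f p) (hg : DifferentiableAt ℝ g p) :
    derivAlong V (fun q => f q * g q) p = f p * derivAlong V g p + g p * derivAlong V f p := by
  simp [derivAlong, fderiv_fun_mul hf hg]

lemma derivAlong_const_mul (k : ℝ) (hf : DifferentiableAt ℝ f p) :
    derivAlong V (fun q => k * f q) p = k * derivAlong V f p := by
  simp [derivAlong, fderiv_const_mul hf]

lemma derivAlong_rpow_const (c : ℝ) (hf : DifferentiableAt ℝ f p) (hfp : f p ≠ 0) :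
    derivAlong V (fun q => f q ^ c) p = c * f p ^ (c - 1) * derivAlong V f p := by
  simp [derivAlong, (hf.hasFDerivAt.rpow_const (Or.inl hfp)).fderiv, mul_assoc]

end DerivAlong

lemma heisX_eq_derivAlong : heisX = derivAlong fun p : ℂ × ℝ => (1, 2 * p.1.im) := by
  ext f p
  have hdir : ((1 : ℂ), 2 * p.1.im) = ((1 : ℂ), (0 : ℝ)) + (2 * p.1.im) • ((0 : ℂ), (1 : ℝ)) := by
    simp
  rw [derivAlong, hdir, map_add, map_smul, smul_eq_mul, heisX]

lemma heisY_eq_derivAlong : heisY = derivAlong fun p : ℂ × ℝ => (Complex.I, -2 * p.1.re) := by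
  ext f p
  have hdir : (Complex.I, -2 * p.1.re) = (Complex.I, (0 : ℝ)) + (-2 * p.1.re) • ((0 : ℂ), (1 : ℝ)) :=
    by simp
  rw [derivAlong, hdir, map_add, map_smul, smul_eq_mul, heisY]
  ring

noncomputable def sublaplacian (f : ℂ × ℝ → ℝ) (p : ℂ × ℝ) : ℝ :=
  heisX (heisX f) p + heisY (heisY f) p

@[simp]
lemma fderiv_re_fst_apply (p v : ℂ × ℝ) : fderiv ℝ (fun q : ℂ × ℝ => q.1.re) p v = v.1.re :=
  congrArg (· v) (Complex.reCLM.comp (ContinuousLinearMap.fst ℝ ℂ ℝ)).fderiv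

@[simp]
lemma fderiv_im_fst_apply (p v : ℂ × ℝ) : fderiv ℝ (fun q : ℂ × ℝ => q.1.im) p v = v.1.im :=
  congrArg (· v) (Complex.imCLM.comp (ContinuousLinearMap.fst ℝ ℂ ℝ)).fderiv

namespace JerisonLee

def w (p : ℂ × ℝ) : ℝ := 1 + p.1.re ^ 2 + p.1.im ^ 2

def denom (p : ℂ × ℝ) : ℝ := p.2 ^ 2 + w p ^ 2

def A (p : ℂ × ℝ) : ℝ := p.1.re * w p + p.1.im * p.2

def B (p : ℂ × ℝ) : ℝ := p.1.im * w p - p.1.re * p.2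

lemma denom_pos (p : ℂ × ℝ) : 0 < denom p := by
  have hw : 0 < w p := by unfold w; positivity
  unfold denom; positivity

-- `A - iB = z̄ (w + it)`, so `A² + B² = |z|² (w² + t²)`.
lemma sq_A_add_sq_B (p : ℂ × ℝ) : A p ^ 2 + B p ^ 2 = (w p - 1) * denom p := by
  unfold A B denom w; ring

lemma differentiable_denom : Differentiable ℝ denom := by
  unfold denom w; fun_prop

lemma differentiable_A : Differentiable ℝ A := by
  unfold A w; fun_prop

lemma differentiable_B : Differentiable ℝ B := by
  unfold B w; fun_prop

lemma heisX_denom (p : ℂ × ℝ) : heisX denom p = 4 * A p := by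
  rw [heisX_eq_derivAlong, derivAlong]
  unfold denom A w
  simp (disch := fun_prop) [fderiv_fun_add, fderiv_fun_pow, fderiv_snd]
  ring

lemma heisY_denom (p : ℂ × ℝ) : heisY denom p = 4 * B p := by
  rw [heisY_eq_derivAlong, derivAlong]
  unfold denom B w
  simp (disch := fun_prop) [fderiv_fun_add, fderiv_fun_pow, fderiv_snd]
  ring

lemma heisX_A (p : ℂ × ℝ) : heisX A p = 3 * w p - 2 := by
  rw [heisX_eq_derivAlong, derivAlong]
  unfold A w
  simp (disch := fun_prop) [fderiv_fun_add, fderiv_fun_mul, fderiv_fun_pow, fderiv_snd]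
  ring

lemma heisY_B (p : ℂ × ℝ) : heisY B p = 3 * w p - 2 := by
  rw [heisY_eq_derivAlong, derivAlong]
  unfold B w
  simp (disch := fun_prop) [fderiv_fun_add, fderiv_fun_sub, fderiv_fun_mul, fderiv_fun_pow,
    fderiv_snd]
  ring

lemma heisX_denom_rpow (c : ℝ) :
    heisX (fun q => denom q ^ c) = fun p => 4 * c * (A p * denom p ^ (c - 1)) := by
  ext p
  rw [heisX_eq_derivAlong, derivAlong_rpow_const _ c (differentiable_denom p) (denom_pos p).ne',
    ← heisX_eq_derivAlong, heisX_denom]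
  ring

lemma heisY_denom_rpow (c : ℝ) :
    heisY (fun q => denom q ^ c) = fun p => 4 * c * (B p * denom p ^ (c - 1)) := by
  ext p
  rw [heisY_eq_derivAlong, derivAlong_rpow_const _ c (differentiable_denom p) (denom_pos p).ne',
    ← heisY_eq_derivAlong, heisY_denom]
  ring

lemma heisX_heisX_denom_rpow (c : ℝ) (p : ℂ × ℝ) :
    heisX (heisX fun q => denom q ^ c) p =
      4 * c * ((3 * w p - 2) * denom p ^ (c - 1) + 4 * (c - 1) * A p ^ 2 * denom p ^ (c - 2)) := by
  have hD := (differentiable_denom p).rpow_const (p := c - 1) (Or.inl (denom_pos p).ne')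
  rw [heisX_denom_rpow, heisX_eq_derivAlong,
    derivAlong_const_mul _ _ ((differentiable_A p).fun_mul hD),
    derivAlong_mul _ (differentiable_A p) hD,
    derivAlong_rpow_const _ _ (differentiable_denom p) (denom_pos p).ne',
    ← heisX_eq_derivAlong, heisX_A, heisX_denom, sub_sub, one_add_one_eq_two]
  ring

lemma heisY_heisY_denom_rpow (c : ℝ) (p : ℂ × ℝ) :
    heisY (heisY fun q => denom q ^ c) p =
      4 * c * ((3 * w p - 2) * denom p ^ (c - 1) + 4 * (c - 1) * B p ^ 2 * denom p ^ (c - 2)) := by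
  have hD := (differentiable_denom p).rpow_const (p := c - 1) (Or.inl (denom_pos p).ne')
  rw [heisY_denom_rpow, heisY_eq_derivAlong,
    derivAlong_const_mul _ _ ((differentiable_B p).fun_mul hD),
    derivAlong_mul _ (differentiable_B p) hD,
    derivAlong_rpow_const _ _ (differentiable_denom p) (denom_pos p).ne',
    ← heisY_eq_derivAlong, heisY_B, heisY_denom, sub_sub, one_add_one_eq_two]
  ring

lemma sublaplacian_denom_rpow (c : ℝ) (p : ℂ × ℝ) :
    sublaplacian (fun q => denom q ^ c) p =
      4 * c * (6 * w p - 4 + 4 * (c - 1) * (w p - 1)) * denom p ^ (c - 1) := by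
  have hpow : denom p ^ (c - 2) * denom p = denom p ^ (c - 1) := by
    rw [← Real.rpow_add_one (denom_pos p).ne']; ring_nf
  rw [sublaplacian, heisX_heisX_denom_rpow, heisY_heisY_denom_rpow]
  linear_combination 16 * c * (c - 1) * denom p ^ (c - 2) * sq_A_add_sq_B p
    + 16 * c * (c - 1) * (w p - 1) * hpow

lemma jerisonLeeBubble_eq_denom_rpow : jerisonLeeBubble = fun p => denom p ^ (-(1 / 2 : ℝ)) := by
  ext p
  simp only [jerisonLeeBubble, denom, w, Complex.sq_norm, Complex.normSq_apply]
  ring_nf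

end JerisonLee

/-- The Jerison–Lee bubble is a positive solution of the CR Yamabe
equation on the Heisenberg group: `X(XU) + Y(YU) = −4 U³`, i.e. `−Δ_H U = 4U³`. -/
theorem jerisonLeeBubble_solves_CR_Yamabe :
    ∀ p : ℂ × ℝ,
      0 < jerisonLeeBubble p ∧
      heisX (heisX jerisonLeeBubble) p + heisY (heisY jerisonLeeBubble) p
        = -4 * (jerisonLeeBubble p) ^ 3 := by
  intro p
  have hD := JerisonLee.denom_pos p
  refine ⟨by rw [JerisonLee.jerisonLeeBubble_eq_denom_rpow]; positivity, ?_⟩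
  have hcube : (JerisonLee.denom p ^ (-(1 / 2 : ℝ))) ^ 3 =
      JerisonLee.denom p ^ (-(1 / 2 : ℝ) - 1) := by
    rw [← Real.rpow_natCast, ← Real.rpow_mul hD.le]; norm_num
  rw [← sublaplacian, JerisonLee.jerisonLeeBubble_eq_denom_rpow,
    JerisonLee.sublaplacian_denom_rpow, hcube]
  ring
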